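/- arXiv:1903.02425 — 4 statements merged into one kernel-verified Lean document; each statement's English description precedes it below -/
import Mathlib

section
/- Let q be a prime power, F = GF(q^3), K = GF(q) ⊆ F, and let ξ be a primitive element of F (a generator of the multiplicative group F*). Then in the quotient group G = F*/K*, the set S of cosets S = {ξK*} ∪ {(1 + tξ)K* : t ∈ K} has exactly q + 1 elements. -/
/-- The subgroup of `Fˣ` consisting of units lying in the subfield `K`. -/
def unitsIn {F : Type*} [Field F] (K : Subfield F) : Subgroup Fˣ where
  carrier := {u | (u : F) ∈ K}
  mul_mem' := fun ha hb => K.mul_mem ha hb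
  one_mem' := K.one_mem
  inv_mem' := fun {u} hu => by
    simpa [Units.val_inv_eq_inv_val] using K.inv_mem hu

theorem singer_set_card (q : ℕ) (hq : IsPrimePow q)
    (F : Type*) [Field F] [Fintype F] (K : Subfield F)
    (hK : Nat.card K = q) (hF : Nat.card F = q ^ 3)
    (ξ : Fˣ) (hξ : ∀ x : Fˣ, x ∈ Subgroup.zpowers ξ) :
    Set.ncard {g : Fˣ ⧸ unitsIn K |
      ∃ u : Fˣ, (QuotientGroup.mk u : Fˣ ⧸ unitsIn K) = g ∧
        ((u : F) = (ξ : F) ∨ ∃ t ∈ K, (u : F) = 1 + t * (ξ : F))} = q + 1 := by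
  have hq2 : 2 ≤ q := hq.two_le
  -- ξ is not in K
  have hξK : (ξ : F) ∉ K := by
    intro hmem
    have hall : ∀ x : F, x ∈ K := by
      intro x
      rcases eq_or_ne x 0 with rfl | hx
      · exact K.zero_mem
      · obtain ⟨n, hn⟩ := hξ (Units.mk0 x hx)
        have hz : ξ ^ n ∈ unitsIn K := Subgroup.zpow_mem _ (show ξ ∈ unitsIn K from hmem) n
        have hx2 : ((ξ ^ n : Fˣ) : F) = x := by simpa using congrArg Units.val hn
        rw [← hx2]; exact hz
    have hKtop : K = ⊤ := by ext x; simp [hall x]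
    have hcard : Nat.card F = q := by
      rw [← hK, hKtop]
      exact (Nat.card_congr Subfield.topEquiv.toEquiv).symm
    rw [hF] at hcard
    have h3 : q ^ 3 = q * q * q := by ring
    rw [h3] at hcard
    have h4 : 4 ≤ q * q := Nat.mul_le_mul hq2 hq2
    have h5 : 4 * q ≤ q * q * q := Nat.mul_le_mul_right q h4
    omega
  -- key linear independence lemma
  have key : ∀ a b : F, a ∈ K → b ∈ K → a + b * (ξ : F) = 0 → a = 0 ∧ b = 0 := by
    intro a b ha hb h
    have hb0 : b = 0 := by
      by_contra hb0
      apply hξK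
      have : (ξ : F) = -a / b := by
        rw [eq_div_iff hb0]; linear_combination h
      rw [this]
      exact K.div_mem (K.neg_mem ha) hb
    constructor
    · rw [hb0] at h; simpa using h
    · exact hb0
  have hne : ∀ t : K, (1 : F) + (t : F) * (ξ : F) ≠ 0 := by
    intro t h
    have := (key 1 t K.one_mem t.2 h).1
    exact one_ne_zero this
  set f : Option K → Fˣ ⧸ unitsIn K := fun o =>
    Option.elim o (QuotientGroup.mk ξ)
      (fun t => QuotientGroup.mk (Units.mk0 ((1 : F) + (t : F) * (ξ : F)) (hne t))) with hf
  have hSr : {g : Fˣ ⧸ unitsIn K |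
      ∃ u : Fˣ, (QuotientGroup.mk u : Fˣ ⧸ unitsIn K) = g ∧
        ((u : F) = (ξ : F) ∨ ∃ t ∈ K, (u : F) = 1 + t * (ξ : F))} = Set.range f := by
    ext g
    constructor
    · rintro ⟨u, rfl, hu | ⟨t, ht, hu⟩⟩
      · exact ⟨none, by simp [hf, Units.ext hu.symm]⟩
      · refine ⟨some ⟨t, ht⟩, ?_⟩
        have : u = Units.mk0 ((1 : F) + t * (ξ : F)) (hne ⟨t, ht⟩) := Units.ext (by simp [hu])
        simp [hf, this]
    · rintro ⟨o, rfl⟩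
      rcases o with _ | t
      · exact ⟨ξ, rfl, Or.inl rfl⟩
      · exact ⟨Units.mk0 _ (hne t), rfl, Or.inr ⟨t, t.2, by simp⟩⟩
  have hinj : Function.Injective f := by
    rintro (_ | t) (_ | s) h
    · rfl
    · exfalso
      rw [hf] at h
      simp only [Option.elim] at h
      have hk := (QuotientGroup.eq (s := unitsIn K)).1 h
      set k : F := ((ξ⁻¹ * Units.mk0 ((1 : F) + (s : F) * (ξ : F)) (hne s) : Fˣ) : F) with hkdef
      have hkK : k ∈ K := hk
      have hval : (ξ : F) * k = (1 : F) + (s : F) * (ξ : F) := by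
        rw [hkdef]
        simp only [Units.val_mul, Units.val_inv_eq_inv_val, Units.val_mk0]
        exact mul_inv_cancel_left₀ ξ.ne_zero _
      have : (1 : F) + ((s : F) - k) * (ξ : F) = 0 := by linear_combination -hval
      exact one_ne_zero (key 1 ((s : F) - k) K.one_mem (K.sub_mem s.2 hkK) this).1
    · exfalso
      rw [hf] at h
      simp only [Option.elim] at h
      have hk := (QuotientGroup.eq (s := unitsIn K)).1 h
      set k : F := (((Units.mk0 ((1 : F) + (t : F) * (ξ : F)) (hne t))⁻¹ * ξ : Fˣ) : F) with hkdef
      have hkK : k ∈ K := hk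
      have hval : ((1 : F) + (t : F) * (ξ : F)) * k = (ξ : F) := by
        rw [hkdef]
        simp only [Units.val_mul, Units.val_inv_eq_inv_val, Units.val_mk0]
        exact mul_inv_cancel_left₀ (hne t) _
      -- (1+tξ) k = ξ  →  k + (k t - 1) ξ = 0
      have h0 : k + (k * (t : F) - 1) * (ξ : F) = 0 := by linear_combination hval
      have hk0 := key k (k * (t : F) - 1) hkK (K.sub_mem (K.mul_mem hkK t.2) K.one_mem) h0
      rw [hk0.1] at hk0
      have : (0 : F) * (t : F) - 1 = 0 := hk0.2
      simp at this
    · rw [hf] at h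
      simp only [Option.elim] at h
      have hk := (QuotientGroup.eq (s := unitsIn K)).1 h
      set k : F := (((Units.mk0 ((1 : F) + (t : F) * (ξ : F)) (hne t))⁻¹ *
        Units.mk0 ((1 : F) + (s : F) * (ξ : F)) (hne s) : Fˣ) : F) with hkdef
      have hkK : k ∈ K := hk
      have hval : ((1 : F) + (t : F) * (ξ : F)) * k = (1 : F) + (s : F) * (ξ : F) := by
        rw [hkdef]
        simp only [Units.val_mul, Units.val_inv_eq_inv_val, Units.val_mk0]
        exact mul_inv_cancel_left₀ (hne t) _
      have h0 : (1 - k) + ((s : F) - k * (t : F)) * (ξ : F) = 0 := by linear_combination -hval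
      have hk0 := key (1 - k) ((s : F) - k * (t : F)) (K.sub_mem K.one_mem hkK)
        (K.sub_mem s.2 (K.mul_mem hkK t.2)) h0
      have hk1 : k = 1 := (sub_eq_zero.mp hk0.1).symm
      have hts : (t : F) = (s : F) := by
        have h2 := hk0.2
        rw [hk1] at h2
        have := sub_eq_zero.mp h2
        simpa using this.symm
      congr 1
      exact Subtype.ext hts
  rw [hSr, ← Nat.card_coe_set_eq, Nat.card_range_of_injective hinj]
  haveI : Fintype K := Fintype.ofFinite _
  rw [Nat.card_eq_fintype_card, Fintype.card_option, ← Nat.card_eq_fintype_card, hK]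
end

section
/- Let q be a prime power, F = GF(q^3), K = GF(q), and let ξ be a primitive element of F. Then the set S = {ξK*} ∪ {(1 + tξ)K* : t ∈ K} of cosets is a perfect difference set for the cyclic group G = F*/K*: every non-identity element of G can be written in exactly one way as a quotient s·t^{-1} of two elements s, t ∈ S. -/
/-!
The nonzero vectors of the `K`-plane `V = K + Kξ` of `F` map onto `S`, so `S` is a line of the
projective plane `F*/K*`. For `g = xK* ≠ 1`, a pair `(s, t) ∈ S²` with `s t⁻¹ = g` is determined
by `s`, which must lie both on `V` and on its translate `xV`. Because `[F : K] = 3` is prime,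
`x ∉ K` generates `F` over `K`, so `xV ≠ V` (otherwise `V` would be an `F`-subspace); two distinct
planes of the `3`-dimensional space `F` meet in a line, which is a single point of `F*/K*`.
-/

open Module
open scoped Pointwise

theorem Submodule.finrank_inf_add_two_eq_of_ne {K E : Type*} [DivisionRing K] [AddCommGroup E]
    [Module K E] [FiniteDimensional K E] {V W : Submodule K E}
    (hV : finrank K V + 1 = finrank K E) (hW : finrank K W + 1 = finrank K E) (hVW : V ≠ W) :
    finrank K ↥(V ⊓ W) + 2 = finrank K E := by
  have hsum := Submodule.finrank_sup_add_finrank_inf_eq V W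
  have hsup : finrank K ↥(V ⊔ W) ≤ finrank K E := Submodule.finrank_le _
  have hinf : finrank K ↥(V ⊓ W) < finrank K V := by
    refine Submodule.finrank_lt_finrank_of_lt (inf_le_left.lt_of_ne fun h => hVW ?_)
    exact Submodule.eq_of_le_of_finrank_eq (inf_eq_left.mp h) (by omega)
  omega

theorem Submodule.eq_bot_or_eq_top_of_smul_le {K F : Type*} [Field K] [Field F] [Algebra K F]
    (hF : (finrank K F).Prime) {x : F} (hx : x ∉ Set.range (algebraMap K F))
    {V : Submodule K F} (hV : x • V ≤ V) : V = ⊥ ∨ V = ⊤ := by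
  have hstable : ∀ y ∈ Algebra.adjoin K {x}, ∀ v ∈ V, y * v ∈ V := by
    intro y hy
    induction hy using Algebra.adjoin_induction with
    | mem y hy =>
      rw [Set.mem_singleton_iff.1 hy]
      exact fun v hv => hV (Submodule.smul_mem_pointwise_smul v x V hv)
    | algebraMap c => exact fun v hv => (Algebra.smul_def c v) ▸ V.smul_mem c hv
    | add y z _ _ hy hz =>
      exact fun v hv => (add_mul y z v).symm ▸ V.add_mem (hy v hv) (hz v hv)
    | mul y z _ _ hy hz => exact fun v hv => (mul_assoc y z v).symm ▸ hy _ (hz v hv)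
  have htop : Algebra.adjoin K {x} = ⊤ :=
    ((Subalgebra.isSimpleOrder_of_finrank_prime K F hF).eq_bot_or_eq_top _).resolve_left
      fun h => hx (Algebra.mem_bot.1 (h ▸ Algebra.subset_adjoin rfl))
  refine or_iff_not_imp_left.2 fun hV0 => ?_
  obtain ⟨v, hv, hv0⟩ := (Submodule.ne_bot_iff V).1 hV0
  refine Submodule.eq_top_iff'.2 fun z => ?_
  simpa [hv0] using hstable (z * v⁻¹) (htop ▸ Algebra.mem_top) v hv

theorem Submodule.finrank_pointwise_smul {K F : Type*} [Field F] [DivisionRing K] [Module K F]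
    [SMulCommClass F K F] {x : F} (hx : x ≠ 0) (V : Submodule K F) :
    finrank K ↥(x • V) = finrank K V :=
  (Submodule.equivMapOfInjective _ (smul_right_injective F hx) V).finrank_eq.symm

section ProjectivePoints

variable {F : Type*} [Field F] {K : Subfield F}

theorem finrank_span_one_pair_of_notMem {ξ : F} (h : ξ ∉ K) :
    finrank K (Submodule.span K {1, ξ}) = 2 := by
  have hli : LinearIndependent K ![1, ξ] :=
    (LinearIndependent.pair_iff' one_ne_zero).2 fun a ha => h (ha ▸ K.mul_mem a.2 K.one_mem)
  rw [← Matrix.range_cons_cons_empty, finrank_span_eq_card hli, Fintype.card_fin]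

theorem Subfield.eq_top_of_mem_of_forall_mem_zpowers {ξ : Fˣ}
    (hξ : ∀ x : Fˣ, x ∈ Subgroup.zpowers ξ) (hξK : (ξ : F) ∈ K) : K = ⊤ := by
  refine eq_top_iff.2 fun y _ => ?_
  rcases eq_or_ne y 0 with rfl | hy
  · exact K.zero_mem
  obtain ⟨n, hn⟩ := hξ (Units.mk0 y hy)
  rw [← Units.val_mk0 hy, ← hn, Units.val_zpow_eq_zpow_val]
  exact K.zpow_mem hξK n

theorem mk_eq_mk_iff_exists_smul {u v : Fˣ} :
    (QuotientGroup.mk u : Fˣ ⧸ unitsIn K) = QuotientGroup.mk v ↔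
      ∃ c : K, (u : F) = c • (v : F) := by
  rw [eq_comm, QuotientGroup.eq]
  constructor
  · intro h
    refine ⟨⟨_, h⟩, ?_⟩
    show (u : F) = ((v⁻¹ * u : Fˣ) : F) * v
    rw [mul_comm, ← Units.val_mul, mul_inv_cancel_left]
  · rintro ⟨c, hc⟩
    have hvu : ((v⁻¹ * u : Fˣ) : F) = c := by
      rw [Units.val_mul, hc, Subfield.smul_def, smul_eq_mul, mul_left_comm, ← Units.val_mul,
        inv_mul_cancel, Units.val_one, mul_one]
    show ((v⁻¹ * u : Fˣ) : F) ∈ K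
    exact hvu ▸ c.2

def projPoints (V : Submodule K F) : Set (Fˣ ⧸ unitsIn K) :=
  {g | ∃ u : Fˣ, (u : F) ∈ V ∧ QuotientGroup.mk u = g}

theorem mk_mem_projPoints_iff {V : Submodule K F} {u : Fˣ} :
    (QuotientGroup.mk u : Fˣ ⧸ unitsIn K) ∈ projPoints V ↔ (u : F) ∈ V := by
  refine ⟨?_, fun hu => ⟨u, hu, rfl⟩⟩
  rintro ⟨w, hw, hwu⟩
  obtain ⟨c, hc⟩ := mk_eq_mk_iff_exists_smul.1 hwu.symm
  exact hc ▸ V.smul_mem c hw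

theorem projPoints_inf (V W : Submodule K F) :
    projPoints (V ⊓ W) = projPoints V ∩ projPoints W := by
  ext g
  obtain ⟨u, rfl⟩ := QuotientGroup.mk_surjective g
  simp only [Set.mem_inter_iff, mk_mem_projPoints_iff, Submodule.mem_inf]

theorem mem_projPoints_smul_iff {V : Submodule K F} {x : Fˣ} {s : Fˣ ⧸ unitsIn K} :
    s ∈ projPoints ((x : F) • V) ↔ (QuotientGroup.mk x)⁻¹ * s ∈ projPoints V := by
  obtain ⟨u, rfl⟩ := QuotientGroup.mk_surjective s
  rw [← QuotientGroup.mk_inv, ← QuotientGroup.mk_mul, mk_mem_projPoints_iff,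
    mk_mem_projPoints_iff, Submodule.mem_smul_iff_inv_mul_mem x.ne_zero]
  push_cast
  rfl

theorem exists_projPoints_eq_singleton {L : Submodule K F} (hL : finrank K L = 1) :
    ∃ s, projPoints L = {s} := by
  obtain ⟨v, hv0, hv⟩ := finrank_eq_one_iff'.1 hL
  have hv0' : (v : F) ≠ 0 := by simpa using hv0
  refine ⟨QuotientGroup.mk (Units.mk0 _ hv0'), Set.eq_singleton_iff_unique_mem.2
    ⟨mk_mem_projPoints_iff.2 v.2, ?_⟩⟩
  rintro _ ⟨u, hu, rfl⟩
  obtain ⟨c, hc⟩ := hv ⟨u, hu⟩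
  exact mk_eq_mk_iff_exists_smul.2 ⟨c, by simpa using (congrArg Subtype.val hc).symm⟩

theorem mem_projPoints_and_mul_inv_eq_iff {V : Submodule K F} {x : Fˣ} {s t : Fˣ ⧸ unitsIn K} :
    (s ∈ projPoints V ∧ t ∈ projPoints V ∧ s * t⁻¹ = QuotientGroup.mk x) ↔
      s ∈ projPoints (V ⊓ (x : F) • V) ∧ t = (QuotientGroup.mk x)⁻¹ * s := by
  rw [projPoints_inf, Set.mem_inter_iff, mem_projPoints_smul_iff, mul_inv_eq_iff_eq_mul,
    eq_inv_mul_iff_mul_eq, eq_comm]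
  constructor
  · rintro ⟨hs, ht, rfl⟩
    exact ⟨⟨hs, by simpa using ht⟩, rfl⟩
  · rintro ⟨⟨hs, hs'⟩, rfl⟩
    exact ⟨hs, by simpa using hs', rfl⟩

theorem existsUnique_mul_inv_eq_of_finrank_eq_three (hF : finrank K F = 3) {V : Submodule K F}
    (hV : finrank K V = 2) {g : Fˣ ⧸ unitsIn K} (hg : g ≠ 1) :
    ∃! p : (Fˣ ⧸ unitsIn K) × (Fˣ ⧸ unitsIn K),
      p.1 ∈ projPoints V ∧ p.2 ∈ projPoints V ∧ p.1 * p.2⁻¹ = g := by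
  obtain ⟨x, rfl⟩ := QuotientGroup.mk_surjective g
  have : FiniteDimensional K F := Module.finite_of_finrank_eq_succ hF
  have hx : (x : F) ∉ Set.range (algebraMap K F) := by
    rintro ⟨c, hc⟩
    refine hg ((QuotientGroup.eq_one_iff x).2 ?_)
    show (x : F) ∈ K
    rw [← hc]
    exact c.2
  have hVx : V ≠ (x : F) • V := fun h => by
    rcases Submodule.eq_bot_or_eq_top_of_smul_le (hF ▸ Nat.prime_three) hx h.symm.le with h0 | h0
    · rw [h0, finrank_bot] at hV
      omega
    · rw [h0, finrank_top, hF] at hV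
      omega
  have hline : finrank K ↥(V ⊓ (x : F) • V) = 1 := by
    have := Submodule.finrank_inf_add_two_eq_of_ne (V := V) (W := (x : F) • V) (by omega)
      (by rw [Submodule.finrank_pointwise_smul x.ne_zero]; omega) hVx
    omega
  obtain ⟨s, hs⟩ := exists_projPoints_eq_singleton hline
  refine ⟨(s, (QuotientGroup.mk x)⁻¹ * s), mem_projPoints_and_mul_inv_eq_iff.2 ⟨hs ▸ rfl, rfl⟩, ?_⟩
  intro p hp
  obtain ⟨hp₁, hp₂⟩ := mem_projPoints_and_mul_inv_eq_iff.1 hp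
  rw [hs, Set.mem_singleton_iff] at hp₁
  exact Prod.ext hp₁ (hp₂.trans (by rw [hp₁]))

theorem projPoints_span_one_pair (ξ : Fˣ) :
    projPoints (Submodule.span K {1, (ξ : F)}) = {g : Fˣ ⧸ unitsIn K |
      ∃ u : Fˣ, (QuotientGroup.mk u : Fˣ ⧸ unitsIn K) = g ∧
        ((u : F) = (ξ : F) ∨ ∃ t ∈ K, (u : F) = 1 + t * (ξ : F))} := by
  ext g
  obtain ⟨u, rfl⟩ := QuotientGroup.mk_surjective g
  rw [mk_mem_projPoints_iff, Submodule.mem_span_pair, Set.mem_ofPred_eq]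
  constructor
  · rintro ⟨a, b, hab⟩
    by_cases ha : a = 0
    · refine ⟨ξ, (mk_eq_mk_iff_exists_smul.2 ⟨b, ?_⟩).symm, Or.inl rfl⟩
      simpa [ha] using hab.symm
    · have hw : (u : F) = a • (1 + (a⁻¹ * b : K) * ξ) := by
        have ha' : (a : F) ≠ 0 := by exact_mod_cast ha
        rw [← hab]
        simp only [Subfield.smul_def, smul_eq_mul]
        push_cast
        field_simp
      have hw0 : (1 + (a⁻¹ * b : K) * ξ : F) ≠ 0 := fun h0 => u.ne_zero (by rw [hw, h0, smul_zero])
      exact ⟨Units.mk0 _ hw0, (mk_eq_mk_iff_exists_smul.2 ⟨a, hw⟩).symm,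
        Or.inr ⟨_, (a⁻¹ * b).2, rfl⟩⟩
  · rintro ⟨w, hwu, hw | ⟨t, ht, hw⟩⟩
    · obtain ⟨c, hc⟩ := mk_eq_mk_iff_exists_smul.1 hwu.symm
      exact ⟨0, c, by simp [hc, hw]⟩
    · obtain ⟨c, hc⟩ := mk_eq_mk_iff_exists_smul.1 hwu.symm
      refine ⟨c, c * ⟨t, ht⟩, ?_⟩
      rw [hc, hw]
      simp only [Subfield.smul_def, smul_eq_mul, Subfield.coe_mul]
      ring

end ProjectivePoints

theorem singer_perfect_difference_set_general (q : ℕ) (hq : IsPrimePow q)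
    (F : Type*) [Field F] (K : Subfield F)
    (hK : Nat.card K = q) (hF : Nat.card F = q ^ 3)
    (ξ : Fˣ) (hξ : ∀ x : Fˣ, x ∈ Subgroup.zpowers ξ) :
    ∀ g : Fˣ ⧸ unitsIn K, g ≠ 1 →
      ∃! p : (Fˣ ⧸ unitsIn K) × (Fˣ ⧸ unitsIn K),
        p.1 ∈ {g : Fˣ ⧸ unitsIn K |
            ∃ u : Fˣ, (QuotientGroup.mk u : Fˣ ⧸ unitsIn K) = g ∧
              ((u : F) = (ξ : F) ∨ ∃ t ∈ K, (u : F) = 1 + t * (ξ : F))} ∧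
        p.2 ∈ {g : Fˣ ⧸ unitsIn K |
            ∃ u : Fˣ, (QuotientGroup.mk u : Fˣ ⧸ unitsIn K) = g ∧
              ((u : F) = (ξ : F) ∨ ∃ t ∈ K, (u : F) = 1 + t * (ξ : F))} ∧
        p.1 * p.2⁻¹ = g := by
  have : Finite F := Nat.finite_of_card_ne_zero (by rw [hF]; exact pow_ne_zero 3 hq.ne_zero)
  have hrank : finrank K F = 3 := by
    have h := Module.natCard_eq_pow_finrank (K := K) (V := F)
    rw [hF, hK] at h
    exact (Nat.pow_right_injective hq.two_le h).symm
  have hξK : (ξ : F) ∉ K := fun h => by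
    have hcard : Nat.card K = Nat.card F := by
      rw [Subfield.eq_top_of_mem_of_forall_mem_zpowers hξ h]
      exact Nat.card_congr Subfield.topEquiv.toEquiv
    rw [hK, hF] at hcard
    exact absurd (Nat.pow_right_injective hq.two_le (hcard.symm.trans (pow_one q).symm))
      (by norm_num)
  rw [← projPoints_span_one_pair]
  exact fun g hg =>
    existsUnique_mul_inv_eq_of_finrank_eq_three hrank (finrank_span_one_pair_of_notMem hξK) hg

theorem singer_perfect_difference_set (q : ℕ) (hq : IsPrimePow q)
    (F : Type*) [Field F] [Fintype F] (K : Subfield F)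
    (hK : Nat.card K = q) (hF : Nat.card F = q ^ 3)
    (ξ : Fˣ) (hξ : ∀ x : Fˣ, x ∈ Subgroup.zpowers ξ) :
    ∀ g : Fˣ ⧸ unitsIn K, g ≠ 1 →
      ∃! p : (Fˣ ⧸ unitsIn K) × (Fˣ ⧸ unitsIn K),
        p.1 ∈ {g : Fˣ ⧸ unitsIn K |
            ∃ u : Fˣ, (QuotientGroup.mk u : Fˣ ⧸ unitsIn K) = g ∧
              ((u : F) = (ξ : F) ∨ ∃ t ∈ K, (u : F) = 1 + t * (ξ : F))} ∧
        p.2 ∈ {g : Fˣ ⧸ unitsIn K |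
            ∃ u : Fˣ, (QuotientGroup.mk u : Fˣ ⧸ unitsIn K) = g ∧
              ((u : F) = (ξ : F) ∨ ∃ t ∈ K, (u : F) = 1 + t * (ξ : F))} ∧
        p.1 * p.2⁻¹ = g :=
  singer_perfect_difference_set_general q hq F K hK hF ξ hξ
end

section
/- Let p be an odd prime, F = GF(p), R = {(a, a^2) : a ∈ F} ⊆ F × F. Define a graph Γ₀ on vertex set F × F where distinct vertices (a,b) and (c,d) are adjacent iff (a+c, b+d) ∈ R. Then any two vertices (a,b) and (c,d) with a ≠ c are at distance at most 2 in Γ₀. -/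
/-!
Write `x = (a, b)` and `y = (c, d)`. A common neighbour `z = (e, f)` must satisfy
`b + f = (a + e)²` and `f + d = (e + c)²`. Subtracting, `b - d = (a - c)(a + c + 2e)`, which is
linear in `e` and solvable because `a - c` and `2` are invertible; `f` is then read off the first
equation. Such a `z` can only coincide with `x` or `y` when `x` and `y` are already adjacent.
-/

/-- The graph on `F × F` with distinct vertices `x, y` adjacent iff
`(x.1 + y.1, x.2 + y.2)` lies on the parabola `R = {(a, a²)}`. -/
def parabolaGraph (p : ℕ) : SimpleGraph (ZMod p × ZMod p) where
  Adj x y := x ≠ y ∧ x.2 + y.2 = (x.1 + y.1) ^ 2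
  symm := ⟨fun x y ⟨h1, h2⟩ => ⟨h1.symm, by rw [add_comm y.2, add_comm y.1]; exact h2⟩⟩
  loopless := ⟨fun x ⟨h, _⟩ => h rfl⟩

theorem exists_sum_sq_eq_sum_sq_of_fst_ne {K : Type*} [Field K] [NeZero (2 : K)]
    {x y : K × K} (h : x.1 ≠ y.1) :
    ∃ z : K × K, x.2 + z.2 = (x.1 + z.1) ^ 2 ∧ z.2 + y.2 = (z.1 + y.1) ^ 2 := by
  have hsub : x.1 - y.1 ≠ 0 := sub_ne_zero.mpr h
  obtain ⟨e, he⟩ : ∃ e, (x.1 - y.1) * (x.1 + y.1 + 2 * e) = x.2 - y.2 :=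
    ⟨((x.2 - y.2) / (x.1 - y.1) - x.1 - y.1) / 2, by field_simp; ring⟩
  exact ⟨(e, (x.1 + e) ^ 2 - x.2), by ring, by linear_combination he⟩

theorem ZMod.two_ne_zero_of_odd_prime {p : ℕ} (hp : p.Prime) (hodd : Odd p) :
    (2 : ZMod p) ≠ 0 :=
  have : Fact p.Prime := ⟨hp⟩
  Ring.two_ne_zero <| by rw [ZMod.ringChar_zmod_n]; exact hodd.ne_two_of_dvd_nat dvd_rfl

theorem parabolaGraph_dist_le_two (p : ℕ) (hp : p.Prime) (hodd : Odd p)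
    (x y : ZMod p × ZMod p) (h : x.1 ≠ y.1) :
    x = y ∨ (parabolaGraph p).Adj x y ∨
      ∃ z, (parabolaGraph p).Adj x z ∧ (parabolaGraph p).Adj z y := by
  have : Fact p.Prime := ⟨hp⟩
  have : NeZero (2 : ZMod p) := ⟨ZMod.two_ne_zero_of_odd_prime hp hodd⟩
  have hxy : x ≠ y := fun hxy => h (congrArg Prod.fst hxy)
  by_cases hadj : x.2 + y.2 = (x.1 + y.1) ^ 2
  · exact Or.inr (Or.inl ⟨hxy, hadj⟩)
  obtain ⟨z, hxz, hzy⟩ := exists_sum_sq_eq_sum_sq_of_fst_ne h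
  refine Or.inr (Or.inr ⟨z, ⟨?_, hxz⟩, ⟨?_, hzy⟩⟩)
  · rintro rfl
    exact hadj hzy
  · rintro rfl
    exact hadj hxz
end

section
/- Let q be a prime power such that p = q^2 + q + 1 is prime, let F = GF(p), let R = {(a, a^2) : a ∈ F}, and let S ⊆ F be a perfect difference set modulo p. Define the graph Γ on vertex set F × F where distinct vertices (a,b), (c,d) are adjacent iff (a+c, b+d) ∈ R, or (a = c and b + d ∈ S). Then Γ has diameter at most 2. -/
def IsPerfectDifferenceSet {n : ℕ} (S : Finset (ZMod n)) : Prop :=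
  ∀ d : ZMod n, d ≠ 0 →
    ∃! p : ZMod n × ZMod n, p.1 ∈ S ∧ p.2 ∈ S ∧ p.1 - p.2 = d

/-- The combined graph on `F × F`: distinct vertices are adjacent iff their sum
lies on the parabola `{(a, a²)}`, or they have equal first coordinates and the
sum of their second coordinates lies in `S`. -/
def combinedGraph (p : ℕ) (S : Finset (ZMod p)) : SimpleGraph (ZMod p × ZMod p) where
  Adj x y := x ≠ y ∧ (x.2 + y.2 = (x.1 + y.1) ^ 2 ∨ (x.1 = y.1 ∧ x.2 + y.2 ∈ S))
  symm := ⟨fun x y ⟨h1, h2⟩ => by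
    refine ⟨h1.symm, ?_⟩
    rcases h2 with h2 | ⟨h2, h3⟩
    · left; rw [add_comm y.2, add_comm y.1]; exact h2
    · right; exact ⟨h2.symm, by rwa [add_comm]⟩⟩
  loopless := ⟨fun x ⟨h, _⟩ => h rfl⟩

/-!
Two vertices in different columns `a ≠ c` have a common neighbour on the parabola: solving
`b + f = (a + e)²` and `f + d = (e + c)²` for `(e, f)` is a linear equation in `e` with leading
coefficient `2 (a - c)`, which is invertible since `p = q² + q + 1` is odd. Two vertices `(a, b)`,
`(a, d)` in the same column have a common neighbour `(a, t)` in that column as soon as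
`b + t, t + d ∈ S`; writing `b - d = s₁ - s₂` with `s₁, s₂ ∈ S` gives `t = s₁ - b`.
-/

theorem SimpleGraph.adj_or_exists_adj_adj_of_forall_ne {V : Type*} (G : SimpleGraph V)
    {x y z : V} (hxy : x ≠ y) (hxz : x ≠ z → G.Adj x z) (hzy : z ≠ y → G.Adj z y) :
    G.Adj x y ∨ ∃ w, G.Adj x w ∧ G.Adj w y := by
  by_cases hx : x = z
  · subst hx
    exact .inl (hzy hxy)
  by_cases hy : z = y
  · subst hy
    exact .inl (hxz hxy)
  exact .inr ⟨z, hxz hx, hzy hy⟩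

theorem ZMod.two_ne_zero_of_odd {n : ℕ} [Nontrivial (ZMod n)] (hn : Odd n) :
    (2 : ZMod n) ≠ 0 := by
  rw [← one_add_one_eq_two]
  exact fun h => one_ne_zero ((ZMod.add_self_eq_zero_iff_eq_zero hn).1 h)

theorem Nat.odd_sq_add_self_add_one (q : ℕ) : Odd (q ^ 2 + q + 1) := by
  rw [sq, ← Nat.mul_succ]
  exact (Nat.even_mul_succ_self q).add_one

theorem exists_add_eq_add_sq_of_ne {F : Type*} [Field F] (h2 : (2 : F) ≠ 0) {a c : F}
    (hac : a ≠ c) (b d : F) : ∃ e f : F, b + f = (a + e) ^ 2 ∧ f + d = (e + c) ^ 2 := by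
  have hac' : a - c ≠ 0 := sub_ne_zero.mpr hac
  refine ⟨((b - d) / (a - c) - a - c) / 2, (a + ((b - d) / (a - c) - a - c) / 2) ^ 2 - b,
    by ring, ?_⟩
  field_simp
  ring

theorem IsPerfectDifferenceSet.exists_add_mem_add_mem {n : ℕ} {S : Finset (ZMod n)}
    (hS : IsPerfectDifferenceSet S) {b d : ZMod n} (hbd : b ≠ d) :
    ∃ t, b + t ∈ S ∧ t + d ∈ S := by
  obtain ⟨⟨s₁, s₂⟩, ⟨hs₁, hs₂, hdiff⟩, -⟩ := hS (b - d) (sub_ne_zero.mpr hbd)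
  refine ⟨s₁ - b, by rwa [add_sub_cancel], ?_⟩
  convert hs₂ using 1
  linear_combination hdiff

theorem combinedGraph_diameter_le_two_general (q : ℕ)
    (hp : (q ^ 2 + q + 1).Prime) (S : Finset (ZMod (q ^ 2 + q + 1)))
    (hS : IsPerfectDifferenceSet S) :
    ∀ x y : ZMod (q ^ 2 + q + 1) × ZMod (q ^ 2 + q + 1), x ≠ y →
      (combinedGraph (q ^ 2 + q + 1) S).Adj x y ∨
        ∃ z, (combinedGraph (q ^ 2 + q + 1) S).Adj x z ∧
          (combinedGraph (q ^ 2 + q + 1) S).Adj z y := by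
  rintro ⟨a, b⟩ ⟨c, d⟩ hxy
  have : Fact (q ^ 2 + q + 1).Prime := ⟨hp⟩
  by_cases hac : a = c
  · subst hac
    have hbd : b ≠ d := fun h => hxy (by rw [h])
    obtain ⟨t, hbt, htd⟩ := hS.exists_add_mem_add_mem hbd
    exact SimpleGraph.adj_or_exists_adj_adj_of_forall_ne _ (z := (a, t)) hxy
      (fun h => ⟨h, .inr ⟨rfl, hbt⟩⟩) (fun h => ⟨h, .inr ⟨rfl, htd⟩⟩)
  · obtain ⟨e, f, hbf, hfd⟩ := exists_add_eq_add_sq_of_ne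
      (ZMod.two_ne_zero_of_odd (Nat.odd_sq_add_self_add_one q)) hac b d
    exact SimpleGraph.adj_or_exists_adj_adj_of_forall_ne _ (z := (e, f)) hxy
      (fun h => ⟨h, .inl hbf⟩) (fun h => ⟨h, .inl hfd⟩)

theorem combinedGraph_diameter_le_two (q : ℕ) (hq : IsPrimePow q)
    (hp : (q ^ 2 + q + 1).Prime) (S : Finset (ZMod (q ^ 2 + q + 1)))
    (hS : IsPerfectDifferenceSet S) :
    ∀ x y : ZMod (q ^ 2 + q + 1) × ZMod (q ^ 2 + q + 1), x ≠ y →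
      (combinedGraph (q ^ 2 + q + 1) S).Adj x y ∨
        ∃ z, (combinedGraph (q ^ 2 + q + 1) S).Adj x z ∧
          (combinedGraph (q ^ 2 + q + 1) S).Adj z y :=
  combinedGraph_diameter_le_two_general q hp S hS
end
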